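/- arXiv:1305.2503 — 5 statements merged into one kernel-verified Lean document; each statement's English description precedes it below -/
import Mathlib

section
/- For positive integers n, k with n > 2k, the odd girth of the Kneser graph K_{n,k} equals 2⌈k/(n−2k)⌉ + 1. -/
open SimpleGraph

/-- The `r`-fold neighborhood: `nbhd G 0 v = {v}`, `nbhd G (r+1) v = ⋃_{w ∈ nbhd G r v} N(w)`. -/
def nbhd {V : Type*} (G : SimpleGraph V) : ℕ → V → Set V
  | 0, v => {v}
  | r+1, v => {y | ∃ w ∈ nbhd G r v, G.Adj w y}

/-- The Kneser graph on `k`-subsets of `[n]`. -/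
def kneser (n k : ℕ) : SimpleGraph {A : Finset (Fin n) // A.card = k} where
  Adj A B := A ≠ B ∧ Disjoint A.1 B.1
  symm := ⟨by rintro A B ⟨h1, h2⟩; exact ⟨h1.symm, h2.symm⟩⟩
  loopless := ⟨by rintro A ⟨h, _⟩; exact h rfl⟩

/-- The odd girth of a graph, as an extended natural number. -/
noncomputable def oddGirth {V : Type*} (G : SimpleGraph V) : ℕ∞ :=
  sInf ((↑) '' {l : ℕ | Odd l ∧ ∃ v : V, ∃ w : G.Walk v v, w.length = l})

/-- The cycle graph on `ZMod m`. -/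
def cyc (m : ℕ) : SimpleGraph (ZMod m) where
  Adj x y := x ≠ y ∧ (y = x + 1 ∨ x = y + 1)
  symm := ⟨by rintro x y ⟨h1, h2⟩; exact ⟨h1.symm, h2.symm⟩⟩
  loopless := ⟨fun x h => h.1 rfl⟩

/-- The `r`-neighborhood complex of `G`, as a set of finite subsets of vertices. -/
def nComplex {V : Type*} (G : SimpleGraph V) (r : ℕ) : Set (Finset V) :=
  {σ | ∃ v : V, ↑σ ⊆ nbhd G r v}

/-!
Two `k`-sets with a common Kneser neighbour `B` both lie in the `(n - k)`-set `Bᶜ`, so they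
differ in at most `n - 2k` elements. Along an odd closed walk `A₀, A₁, …, A_{2s+1} = A₀` this gives
`|A₀ \ A_{2s}| ≤ s (n - 2k)`, while `A_{2s}` is disjoint from `A₀`; hence `k ≤ s (n - 2k)`.
Conversely, if `k ≤ t (n - 2k)`, the intervals `[a, a + k)` of `[n]` are joined to `[0, k)` by
walks of length `2t` that shift the interval by at most `n - 2k` every two steps, passing through
complements of intervals of length `n - k`; the walk reaching `[k, 2k)` closes up to an odd cycle
of length `2t + 1`.
-/

open Finset

lemma oddGirth_eq_two_mul_add_one {V : Type*} {G : SimpleGraph V} {t : ℕ}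
    (h : ∀ s, (∃ v, ∃ w : G.Walk v v, w.length = 2 * s + 1) ↔ t ≤ s) :
    oddGirth G = (2 * t + 1 : ℕ) := by
  apply le_antisymm
  · exact sInf_le ⟨_, ⟨odd_two_mul_add_one t, (h t).2 le_rfl⟩, rfl⟩
  · refine le_sInf ?_
    rintro _ ⟨_, ⟨⟨s, rfl⟩, hs⟩, rfl⟩
    have hts : t ≤ s := (h s).1 hs
    exact_mod_cast (by omega : 2 * t + 1 ≤ 2 * s + 1)

section Kneser

variable {n k : ℕ}

lemma kneser_adj_iff (hk : 0 < k) {A B : {A : Finset (Fin n) // A.card = k}} :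
    (kneser n k).Adj A B ↔ Disjoint A.1 B.1 := by
  refine ⟨And.right, fun hAB => ⟨?_, hAB⟩⟩
  rintro rfl
  rw [disjoint_self_iff_empty] at hAB
  have := A.2
  simp [hAB] at this
  omega

lemma kneser_card_sdiff_le {A B C : {A : Finset (Fin n) // A.card = k}}
    (hAB : (kneser n k).Adj A B) (hBC : (kneser n k).Adj B C) :
    #(A.1 \ C.1) ≤ n - 2 * k := by
  have hunion : A.1 ∪ C.1 ⊆ B.1ᶜ :=
    union_subset (subset_compl_iff_disjoint_right.2 hAB.2)
      (subset_compl_iff_disjoint_right.2 hBC.2.symm)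
  have hcard := card_le_card hunion
  rw [card_compl, Fintype.card_fin, B.2, ← card_sdiff_add_card, C.2] at hcard
  omega

lemma kneser_card_sdiff_le_of_length_eq_two_mul {u v : {A : Finset (Fin n) // A.card = k}}
    (w : (kneser n k).Walk u v) {i : ℕ} (hw : w.length = 2 * i) :
    #(u.1 \ v.1) ≤ i * (n - 2 * k) := by
  induction i generalizing u with
  | zero => simp [Walk.eq_of_length_eq_zero hw]
  | succ i ih =>
    obtain _ | ⟨hux, _ | ⟨hxy, w⟩⟩ := w
    · simp at hw
    · simp at hw; omega
    · rename_i x y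
      calc #(u.1 \ v.1) ≤ #(u.1 \ y.1) + #(y.1 \ v.1) :=
            (card_le_card (sdiff_triangle _ _ _)).trans (card_union_le _ _)
        _ ≤ (n - 2 * k) + i * (n - 2 * k) :=
            add_le_add (kneser_card_sdiff_le hux hxy) (ih w (by simp at hw; omega))
        _ = (i + 1) * (n - 2 * k) := by ring

lemma kneser_le_mul_of_length_eq_two_mul_add_one {v : {A : Finset (Fin n) // A.card = k}}
    (w : (kneser n k).Walk v v) {s : ℕ} (hw : w.length = 2 * s + 1) :
    k ≤ s * (n - 2 * k) := by
  obtain _ | ⟨hvx, w⟩ := w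
  · simp at hw
  · rename_i x
    have hx := kneser_card_sdiff_le_of_length_eq_two_mul w (i := s) (by simp at hw; omega)
    rwa [sdiff_eq_self_of_disjoint hvx.2.symm, x.2] at hx

def kneserInterval (a : ℕ) (h : a + k ≤ n) : {A : Finset (Fin n) // A.card = k} :=
  ⟨(Ico a (a + k)).attachFin fun m hm => by rw [mem_Ico] at hm; omega, by simp⟩

def kneserCoInterval (a : ℕ) (h : a + (n - k) ≤ n) (hkn : k ≤ n) :
    {A : Finset (Fin n) // A.card = k} :=
  ⟨((Ico a (a + (n - k))).attachFin fun m hm => by rw [mem_Ico] at hm; omega)ᶜ, by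
    rw [card_compl, card_attachFin]; simp; omega⟩

lemma kneser_adj_kneserInterval_kneserCoInterval (hk : 0 < k) {a b : ℕ} (ha : a + k ≤ n)
    (hb : b + (n - k) ≤ n) (hkn : k ≤ n) (hba : b ≤ a) (hab : a + k ≤ b + (n - k)) :
    (kneser n k).Adj (kneserInterval a ha) (kneserCoInterval b hb hkn) := by
  rw [kneser_adj_iff hk, kneserInterval, kneserCoInterval, disjoint_compl_right_iff]
  intro x
  simp only [mem_attachFin, mem_Ico]
  omega

lemma kneser_adj_kneserInterval (hk : 0 < k) {a b : ℕ} (ha : a + k ≤ n) (hb : b + k ≤ n)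
    (hab : a + k ≤ b) : (kneser n k).Adj (kneserInterval a ha) (kneserInterval b hb) := by
  rw [kneser_adj_iff hk, kneserInterval, kneserInterval, Finset.disjoint_left]
  intro x
  simp only [mem_attachFin, mem_Ico]
  omega

lemma kneser_exists_walk_kneserInterval (hk : 0 < k) (h : 2 * k ≤ n) :
    ∀ (i a : ℕ) (ha : a + k ≤ n), a ≤ i * (n - 2 * k) →
      ∃ w : (kneser n k).Walk (kneserInterval 0 (by omega)) (kneserInterval a ha),
        w.length = 2 * i
  | 0, a, ha, hai => by
    obtain rfl : a = 0 := by simpa using hai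
    exact ⟨.nil, rfl⟩
  | i + 1, a, ha, hai => by
    rw [add_mul] at hai
    have hb : a - (n - 2 * k) + k ≤ n := by omega
    obtain ⟨w, hw⟩ := kneser_exists_walk_kneserInterval hk h i _ hb (by omega)
    have hbc : a - (n - 2 * k) + (n - k) ≤ n := by omega
    have h₁ := kneser_adj_kneserInterval_kneserCoInterval hk hb hbc (by omega) le_rfl (by omega)
    have h₂ := kneser_adj_kneserInterval_kneserCoInterval hk ha hbc (by omega) (by omega)
      (by omega)
    exact ⟨(w.concat h₁).concat h₂.symm, by simp [hw]; ring⟩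

lemma kneser_exists_closed_walk_iff (hk : 0 < k) (h : 2 * k ≤ n) (s : ℕ) :
    (∃ v, ∃ w : (kneser n k).Walk v v, w.length = 2 * s + 1) ↔ k ≤ s * (n - 2 * k) := by
  refine ⟨fun ⟨_, w, hw⟩ => kneser_le_mul_of_length_eq_two_mul_add_one w hw, fun hks => ?_⟩
  obtain ⟨w, hw⟩ := kneser_exists_walk_kneserInterval hk h s k (by omega) hks
  have hclose :=
    kneser_adj_kneserInterval (n := n) hk (a := 0) (b := k) (by omega) (by omega) (by omega)
  exact ⟨_, w.concat hclose.symm, by simp [hw]⟩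

end Kneser

lemma Nat.ceil_div_le_iff {α : Type*} [Semifield α] [LinearOrder α]
    [IsStrictOrderedRing α] [FloorSemiring α] {a b s : ℕ} (hb : 0 < b) :
    ⌈(a : α) / b⌉₊ ≤ s ↔ a ≤ s * b := by
  rw [Nat.ceil_le, div_le_iff₀ (by exact_mod_cast hb)]
  exact_mod_cast Iff.rfl

/-- For `n > 2k`, the odd girth of the Kneser graph `K_{n,k}` equals `2⌈k/(n-2k)⌉ + 1`. -/
theorem stmt_1 (n k : ℕ) (hk : 0 < k) (h : 2 * k < n) :
    oddGirth (kneser n k) = ((2 * ⌈(k : ℚ) / ((n : ℚ) - 2 * k)⌉₊ + 1 : ℕ) : ℕ∞) := by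
  have hd : (n : ℚ) - 2 * k = ((n - 2 * k : ℕ) : ℚ) := by
    rw [Nat.cast_sub h.le]
    push_cast
    ring
  refine oddGirth_eq_two_mul_add_one fun s => ?_
  rw [kneser_exists_closed_walk_iff hk h.le, hd, Nat.ceil_div_le_iff (by omega)]
end

section
/- Let n, k be positive integers and r a nonnegative integer with n > 2k and k − 1 = (n−2k)r. Then the odd girth of K_{n,k} equals 2r + 3. -/
open SimpleGraph

/-!
Lower bound: on a closed walk `A₀, …, A_{2t}` of odd length `2t + 1` in `K_{n,k}` consecutive sets
are disjoint, so each point of `[n]` lies in at most `t` of them; double counting gives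
`(2t + 1) k ≤ n t`, i.e. `k ≤ (n - 2k) t`, which forces `t > r` since `k = (n - 2k) r + 1`.
Upper bound: consecutive ones among the cyclic intervals `[a, a + k)` of `ℤ/n` starting at
`0, k, 2k, …, (2r + 2) k` are disjoint, and the last one is disjoint from `[0, k)` because
`(2r + 2) k + (n - k - 1) = (r + 1) n`.
-/

open Finset

namespace SimpleGraph

variable {V : Type*} {G : SimpleGraph V}

lemma exists_walk_length_eq_of_adj (f : ℕ → V) :
    ∀ m, (∀ i < m, G.Adj (f i) (f (i + 1))) → ∃ w : G.Walk (f 0) (f m), w.length = m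
  | 0, _ => ⟨Walk.nil, rfl⟩
  | m + 1, hadj => by
    obtain ⟨w, hw⟩ := exists_walk_length_eq_of_adj f m fun i hi => hadj i (by omega)
    exact ⟨w.concat (hadj m (by omega)), by rw [Walk.length_concat, hw]⟩

-- The rotation `i ↦ i + 1 (mod 2t+1)` maps the visits to `s` injectively to non-visits.
lemma Walk.card_filter_getVert_mem_le {v : V} (w : G.Walk v v) {s : Set V} [DecidablePred (· ∈ s)]
    (hs : G.IsIndepSet s) {t : ℕ} (hw : w.length = 2 * t + 1) :
    #{i ∈ range w.length | w.getVert i ∈ s} ≤ t := by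
  set S := {i ∈ range w.length | w.getVert i ∈ s}
  let next : ℕ → ℕ := fun i => if i + 1 = w.length then 0 else i + 1
  have getVert_next (i : ℕ) : w.getVert (next i) = w.getVert (i + 1) := by
    by_cases h : i + 1 = w.length
    · simp only [next, if_pos h, h, Walk.getVert_zero, Walk.getVert_length]
    · simp only [next, if_neg h]
  have hmaps : Set.MapsTo next S ↑(range w.length \ S) := by
    intro i hi
    simp only [S, mem_coe, mem_sdiff, mem_filter, mem_range] at hi ⊢
    refine ⟨by simp only [next]; split_ifs <;> omega, fun ⟨_, hnext⟩ => ?_⟩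
    rw [getVert_next] at hnext
    have hadj := w.adj_getVert_succ hi.1
    exact hs hi.2 hnext hadj.ne hadj
  have hinj : Set.InjOn next S := by
    intro i hi j hj hij
    simp only [S, mem_coe, mem_filter, mem_range, next] at hi hj hij
    split_ifs at hij <;> omega
  have hcard := card_le_card_of_injOn next hmaps hinj
  rw [card_sdiff_of_subset (s := S) (filter_subset _ _), card_range] at hcard
  omega

end SimpleGraph

lemma oddGirth_eq_of_isLeast {V : Type*} {G : SimpleGraph V} {m : ℕ} (hm : Odd m)
    (hex : ∃ v, ∃ w : G.Walk v v, w.length = m)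
    (hle : ∀ v (w : G.Walk v v), Odd w.length → m ≤ w.length) : oddGirth G = m :=
  IsLeast.csInf_eq ⟨⟨m, ⟨hm, hex⟩, rfl⟩, by
    rintro _ ⟨l, ⟨hl, v, w, rfl⟩, rfl⟩
    exact_mod_cast hle v w hl⟩

section Kneser

variable {n k : ℕ}

lemma kneser_isIndepSet_mem (x : Fin n) : (kneser n k).IsIndepSet {A | x ∈ A.1} :=
  fun _ hA _ hB _ hAB => disjoint_left.mp hAB.2 hA hB

-- Double counting: each `x ∈ [n]` lies in at most `t` of the `2t+1` sets visited.
lemma kneser_length_mul_le {v} (w : (kneser n k).Walk v v) {t : ℕ} (hw : w.length = 2 * t + 1) :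
    (2 * t + 1) * k ≤ n * t := by
  classical
  have := card_nsmul_le_card_nsmul (fun i x => x ∈ (w.getVert i).1) (s := range w.length)
    (t := univ) (m := k) (n := t) (fun i _ => by simp [bipartiteAbove, (w.getVert i).2])
    (fun x _ => w.card_filter_getVert_mem_le (kneser_isIndepSet_mem x) hw)
  simpa [hw] using this

end Kneser

section Arc

variable {n : ℕ} [NeZero n]

open Fin.NatCast

def arc (k : ℕ) (a : Fin n) : Finset (Fin n) := (range k).image fun j : ℕ => a + (j : Fin n)

lemma card_arc {k : ℕ} (hk : k ≤ n) (a : Fin n) : #(arc k a) = k := by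
  rw [arc, card_image_of_injOn, card_range]
  intro i hi j hj hij
  exact CharP.natCast_injOn_Iio (Fin n) n ((mem_range.mp hi).trans_le hk)
    ((mem_range.mp hj).trans_le hk) (add_left_cancel hij)

lemma disjoint_arc_add {k s : ℕ} (hks : k ≤ s) (hsk : s + k ≤ n) (a : Fin n) :
    Disjoint (arc k a) (arc k (a + s)) := by
  simp only [arc, Finset.disjoint_left, mem_image, mem_range, not_exists, not_and]
  rintro _ ⟨i, hi, rfl⟩ j hj hij
  rw [add_assoc, ← Nat.cast_add] at hij
  have := CharP.natCast_injOn_Iio (Fin n) n (show s + j < n by omega) (show i < n by omega)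
    (add_left_cancel hij)
  omega

lemma kneser_exists_closed_walk {k s l : ℕ} (hk : 0 < k) (hks : k ≤ s) (hsk : s + k ≤ n)
    (hdvd : n ∣ k * l + s) : ∃ v, ∃ w : (kneser n k).Walk v v, w.length = l + 1 := by
  let A : ℕ → {A : Finset (Fin n) // A.card = k} := fun i =>
    ⟨arc k ((k * i : ℕ) : Fin n), card_arc (by omega) _⟩
  have hadj : ∀ i < l, (kneser n k).Adj (A i) (A (i + 1)) := fun i _ => by
    rw [kneser_adj_iff hk]
    convert disjoint_arc_add (le_refl k) (by omega) ((k * i : ℕ) : Fin n) using 3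
    rw [mul_add_one, Nat.cast_add]
  have hclose : (kneser n k).Adj (A l) (A 0) := by
    rw [kneser_adj_iff hk]
    convert disjoint_arc_add hks hsk ((k * l : ℕ) : Fin n) using 3
    rw [← Nat.cast_add, (CharP.cast_eq_zero_iff (Fin n) n _).mpr hdvd, mul_zero, Nat.cast_zero]
  obtain ⟨w, hw⟩ := SimpleGraph.exists_walk_length_eq_of_adj A l hadj
  exact ⟨A 0, w.concat hclose, by rw [SimpleGraph.Walk.length_concat, hw]⟩

end Arc

/-- If `n > 2k` and `k - 1 = (n-2k)r` then the odd girth of `K_{n,k}` equals `2r + 3`. -/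
theorem stmt_3 (n k r : ℕ) (hk : 0 < k) (h : 2 * k < n) (hr : k - 1 = (n - 2 * k) * r) :
    oddGirth (kneser n k) = ((2 * r + 3 : ℕ) : ℕ∞) := by
  obtain ⟨d, rfl⟩ : ∃ d, n = 2 * k + d := ⟨n - 2 * k, by omega⟩
  have hkd : k = d * r + 1 := by rw [Nat.add_sub_cancel_left] at hr; omega
  have : NeZero (2 * k + d) := ⟨by omega⟩
  refine oddGirth_eq_of_isLeast ⟨r + 1, by ring⟩ ?_ fun v w ⟨t, ht⟩ => ?_
  · -- `2r + 2` shifts by `k` followed by one shift by `n - k - 1` add up to `(r + 1) n`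
    refine kneser_exists_closed_walk (s := k + d - 1) (l := 2 * r + 2) hk (by omega) (by omega)
      ⟨r + 1, ?_⟩
    rw [show k + d - 1 = d * r + d by omega, hkd]
    ring
  · have hbound := kneser_length_mul_le w ht
    rw [ht]
    by_contra! htr
    have : d * t ≤ d * r := Nat.mul_le_mul_left d (by omega)
    nlinarith
end

section
/- Let r ≥ 2 and m odd with m > 2r. The faces of N_r(C_m) that are not faces of N_{r−1}(C_m) are exactly the faces σ containing, for some x ∈ ℤ/mℤ, both x and x + 2r (indices mod m, with σ ⊆ {x, x+1, ..., x+2r}); moreover the sets P_x = {σ ∈ F N_r(C_m) : {x, x+2r} ⊆ σ} for x ∈ ℤ/mℤ partition F N_r(C_m) \ F N_{r−1}(C_m). -/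
open SimpleGraph

/-!
On the cycle `C_m` (`m > 1`) the vertices reached from `v` by walks of length exactly `s` are
`v - s + 2i` for `0 ≤ i ≤ s`, so the faces of `N_s(C_m)` are the sets inside some progression
`evenProg z s = {z, z + 2, …, z + 2s}`. A face of `N_r` inside `evenProg z r` that misses `z` or
`z + 2r` already lies in a progression of length `r - 1`. Conversely, since `2` is a unit modulo
the odd `m > 2r`, two elements of a progression of length `s ≤ r` differing by `2r` must be its
two ends; this forces `s = r` and determines `x = z`.
-/

def evenProg {m : ℕ} (z : ZMod m) (s : ℕ) : Set (ZMod m) :=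
  {y | ∃ i ≤ s, y = z + ((2 * i : ℕ) : ZMod m)}

theorem cyc_adj {m : ℕ} {x y : ZMod m} : (cyc m).Adj x y ↔ x ≠ y ∧ (y = x + 1 ∨ x = y + 1) :=
  Iff.rfl

theorem nbhd_cyc {m : ℕ} [Fact (1 < m)] (s : ℕ) (v : ZMod m) :
    nbhd (cyc m) s v = evenProg (v - (s : ZMod m)) s := by
  induction s generalizing v with
  | zero => ext; simp [nbhd, evenProg]
  | succ s ih =>
    ext y
    change (∃ w ∈ nbhd (cyc m) s v, (cyc m).Adj w y) ↔ y ∈ evenProg _ _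
    simp only [ih, cyc_adj]
    have h1 : (1 : ZMod m) ≠ 0 := one_ne_zero
    constructor
    · rintro ⟨w, ⟨i, hi, rfl⟩, -, rfl | hw⟩
      · exact ⟨i + 1, by omega, by push_cast; ring⟩
      · exact ⟨i, by omega, by push_cast at hw ⊢; linear_combination -hw⟩
    · rintro ⟨i, hi, rfl⟩
      rcases i with _ | i
      · refine ⟨v - s, ⟨0, by omega, by simp⟩, ?_, Or.inr (by push_cast; ring)⟩
        intro h; apply h1; push_cast at h; linear_combination h
      · refine ⟨v - s + 2 * i, ⟨i, by omega, by push_cast; ring⟩, ?_, Or.inl (by push_cast; ring)⟩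
        intro h; apply h1; push_cast at h; linear_combination -h

theorem mem_nComplex_cyc {m : ℕ} [Fact (1 < m)] (s : ℕ) (σ : Finset (ZMod m)) :
    σ ∈ nComplex (cyc m) s ↔ ∃ z : ZMod m, ↑σ ⊆ evenProg z s := by
  simp only [nComplex, Set.mem_ofPred_eq, nbhd_cyc]
  exact ⟨fun ⟨v, hv⟩ => ⟨_, hv⟩, fun ⟨z, hz⟩ => ⟨z + s, by rwa [add_sub_cancel_right]⟩⟩

theorem subset_evenProg_of_left_notMem {m s : ℕ} {z : ZMod m} {σ : Finset (ZMod m)}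
    (hσ : ↑σ ⊆ evenProg z (s + 1)) (hz : z ∉ σ) : ↑σ ⊆ evenProg (z + 2) s := by
  intro y hy
  obtain ⟨i, hi, rfl⟩ := hσ hy
  rcases i with _ | i
  · exact absurd (by simpa using hy) hz
  · exact ⟨i, by omega, by push_cast; ring⟩

theorem subset_evenProg_of_right_notMem {m s : ℕ} {z : ZMod m} {σ : Finset (ZMod m)}
    (hσ : ↑σ ⊆ evenProg z (s + 1)) (hz : z + ((2 * (s + 1) : ℕ) : ZMod m) ∉ σ) :
    ↑σ ⊆ evenProg z s := by
  intro y hy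
  obtain ⟨i, hi, rfl⟩ := hσ hy
  refine ⟨i, Nat.le_of_lt_succ (lt_of_le_of_ne hi ?_), rfl⟩
  rintro rfl
  exact hz hy

theorem eq_of_natCast_two_mul_eq {m a b : ℕ} (hm : Odd m) (ha : a < m) (hb : b < m)
    (h : ((2 * a : ℕ) : ZMod m) = ((2 * b : ℕ) : ZMod m)) : a = b := by
  have hcop : Nat.gcd m 2 = 1 := (Nat.coprime_two_left.mpr hm).symm
  have hab : a ≡ b [MOD m] := ((ZMod.natCast_eq_natCast_iff _ _ _).mp h).cancel_left_of_coprime hcop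
  rwa [Nat.ModEq, Nat.mod_eq_of_lt ha, Nat.mod_eq_of_lt hb] at hab

theorem eq_and_eq_of_mem_evenProg {m r s : ℕ} (hm : Odd m) (h : 2 * r < m) (hs : s ≤ r)
    {z x : ZMod m} (hx : x ∈ evenProg z s) (hx' : x + ((2 * r : ℕ) : ZMod m) ∈ evenProg z s) :
    x = z ∧ s = r := by
  obtain ⟨a, ha, rfl⟩ := hx
  obtain ⟨b, hb, hab⟩ := hx'
  have : a + r = b := eq_of_natCast_two_mul_eq hm (by omega) (by omega)
    (by push_cast at hab ⊢; linear_combination hab)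
  obtain rfl : a = 0 := by omega
  exact ⟨by simp, by omega⟩

theorem ends_mem_of_notMem_nComplex_cyc {m s : ℕ} [Fact (1 < m)] {z : ZMod m}
    {σ : Finset (ZMod m)} (hσ : ↑σ ⊆ evenProg z (s + 1)) (hσs : σ ∉ nComplex (cyc m) s) :
    z ∈ σ ∧ z + ((2 * (s + 1) : ℕ) : ZMod m) ∈ σ := by
  rw [mem_nComplex_cyc, not_exists] at hσs
  constructor <;> by_contra hn
  · exact hσs _ (subset_evenProg_of_left_notMem hσ hn)
  · exact hσs _ (subset_evenProg_of_right_notMem hσ hn)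

/-- For `r ≥ 2` and odd `m > 2r`: the faces of `N_r(C_m)` not in `N_{r-1}(C_m)` are exactly
the faces containing `x` and `x + 2r` for some `x`, with all vertices within `{x, …, x+2r}`;
moreover the posets `P_x` partition this difference (the `x` is unique). -/
theorem stmt_13 (r m : ℕ) (hr : 2 ≤ r) (hm : Odd m) (h : 2 * r < m) :
    (∀ σ : Finset (ZMod m),
      (σ ∈ nComplex (cyc m) r ∧ σ ∉ nComplex (cyc m) (r - 1)) ↔
        (σ ∈ nComplex (cyc m) r ∧ ∃ x : ZMod m, x ∈ σ ∧ x + ((2 * r : ℕ) : ZMod m) ∈ σ ∧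
          ∀ y ∈ σ, ∃ j : ℕ, j ≤ 2 * r ∧ y = x + (j : ZMod m))) ∧
    (∀ σ : Finset (ZMod m), σ ∈ nComplex (cyc m) r → σ ∉ nComplex (cyc m) (r - 1) →
      ∃! x : ZMod m, x ∈ σ ∧ x + ((2 * r : ℕ) : ZMod m) ∈ σ) := by
  have : Fact (1 < m) := ⟨by omega⟩
  obtain ⟨s, rfl⟩ : ∃ s, r = s + 1 := ⟨r - 1, by omega⟩
  rw [Nat.add_sub_cancel]
  refine ⟨fun σ => ⟨?_, ?_⟩, ?_⟩
  · rintro ⟨h1, h2⟩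
    obtain ⟨z, hz⟩ := (mem_nComplex_cyc _ σ).1 h1
    obtain ⟨hz0, hzr⟩ := ends_mem_of_notMem_nComplex_cyc hz h2
    refine ⟨h1, z, hz0, hzr, fun y hy => ?_⟩
    obtain ⟨i, hi, rfl⟩ := hz hy
    exact ⟨2 * i, by omega, rfl⟩
  · rintro ⟨h1, x, hx, hxr, -⟩
    refine ⟨h1, fun h2 => ?_⟩
    obtain ⟨z, hz⟩ := (mem_nComplex_cyc s σ).1 h2
    exact absurd (eq_and_eq_of_mem_evenProg hm h (by omega) (hz hx) (hz hxr)).2 (by omega)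
  · intro σ h1 h2
    obtain ⟨z, hz⟩ := (mem_nComplex_cyc _ σ).1 h1
    refine ⟨z, ends_mem_of_notMem_nComplex_cyc hz h2, fun x ⟨hx, hxr⟩ => ?_⟩
    exact (eq_and_eq_of_mem_evenProg hm h le_rfl (hz hx) (hz hxr)).1
end

section
/- Let n, k be positive integers and r a nonnegative integer with n > 2k and k − 1 = r(n−2k). If G is a graph with fewer than C(n,k) vertices whose odd girth is at least that of K_{n,k} (in particular equal to it, 2r+3), then there is no graph homomorphism from K_{n,k} to G. -/
open SimpleGraph

/-!
By pigeonhole, a homomorphism `f : K_{n,k} → G` identifies two distinct `k`-sets `A ≠ B`, and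
`|A ∩ B| ≤ k - 1 = r (n - 2k)`. Two steps in `K_{n,k}` can shrink the intersection with `B` by
`n - 2k`, which yields an odd `A`–`B` walk of length at most `2r + 1`; its image under `f` is an odd
closed walk of `G`. Conversely, two steps in `K_{n,k}` remove at most `n - 2k` elements of a set,
so an odd closed walk of length `2j + 1` forces `k ≤ j (n - 2k)`, i.e. the odd girth of `K_{n,k}`
is at least `2r + 3`.
-/

open Finset

lemma oddGirth_le_length {V : Type*} {G : SimpleGraph V} {v : V} (w : G.Walk v v)
    (hw : Odd w.length) : oddGirth G ≤ w.length :=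
  sInf_le ⟨w.length, ⟨hw, v, w, rfl⟩, rfl⟩

lemma le_oddGirth {V : Type*} {G : SimpleGraph V} {m : ℕ}
    (h : ∀ v (w : G.Walk v v), Odd w.length → m ≤ w.length) : (m : ℕ∞) ≤ oddGirth G :=
  le_sInf <| by
    rintro _ ⟨l, ⟨hl, v, w, rfl⟩, rfl⟩
    exact_mod_cast h v w hl

lemma Finset.exists_card_eq_disjoint {α : Type*} [Fintype α] [DecidableEq α] (s : Finset α)
    {m : ℕ} (h : #s + m ≤ Fintype.card α) : ∃ t : Finset α, #t = m ∧ Disjoint t s := by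
  obtain ⟨t, hts, ht⟩ := exists_subset_card_eq (s := sᶜ) (n := m) (by rw [card_compl]; omega)
  exact ⟨t, ht, disjoint_left.2 fun a hat has => mem_compl.1 (hts hat) has⟩

section Kneser

variable {n k : ℕ} {A B U V D : {s : Finset (Fin n) // #s = k}}

lemma kneser_adj_of_disjoint (hk : 0 < k) (hd : Disjoint A.1 B.1) : (kneser n k).Adj A B := by
  refine ⟨?_, hd⟩
  rintro rfl
  have hA := A.2
  rw [disjoint_self.1 hd] at hA
  simp only [bot_eq_empty, card_empty] at hA
  omega

lemma kneser_card_inter_lt_of_ne (hne : A ≠ B) : #(A.1 ∩ B.1) < k := by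
  by_contra! hle
  have hA := eq_of_subset_of_card_le inter_subset_left (A.2.trans_le hle)
  have hB := eq_of_subset_of_card_le inter_subset_right (B.2.trans_le hle)
  exact hne (Subtype.ext (hA.symm.trans hB))

lemma kneser_card_sdiff_le_of_adj_of_adj (hUV : (kneser n k).Adj U V)
    (hVD : (kneser n k).Adj V D) : #(U.1 \ D.1) ≤ n - 2 * k := by
  have hdisj : Disjoint (U.1 ∪ D.1) V.1 := disjoint_union_left.2 ⟨hUV.2, hVD.2.symm⟩
  have hunion := card_union_of_disjoint hdisj
  have huniv := card_le_univ (U.1 ∪ D.1 ∪ V.1)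
  have hsdiff := card_sdiff_add_card U.1 D.1
  simp only [Fintype.card_fin, D.2, V.2] at hunion huniv hsdiff
  omega

lemma kneser_card_sdiff_getVert_le (w : (kneser n k).Walk A B) :
    ∀ i, 2 * i ≤ w.length → #(A.1 \ (w.getVert (2 * i)).1) ≤ i * (n - 2 * k)
  | 0, _ => by simp
  | i + 1, hi => by
    have hstep := kneser_card_sdiff_le_of_adj_of_adj (w.adj_getVert_succ (i := 2 * i) (by omega))
      (w.adj_getVert_succ (i := 2 * i + 1) (by omega))
    have ih := kneser_card_sdiff_getVert_le w i (by omega)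
    calc #(A.1 \ (w.getVert (2 * (i + 1))).1)
        ≤ #(A.1 \ (w.getVert (2 * i)).1)
            + #((w.getVert (2 * i)).1 \ (w.getVert (2 * i + 1 + 1)).1) :=
          (card_le_card (sdiff_triangle _ _ _)).trans (card_union_le _ _)
      _ ≤ (i + 1) * (n - 2 * k) := by rw [add_mul]; omega

lemma kneser_le_mul_of_length_eq {j : ℕ} (w : (kneser n k).Walk A A) (hw : w.length = 2 * j + 1) :
    k ≤ j * (n - 2 * k) := by
  have hadj : (kneser n k).Adj (w.getVert (2 * j)) A := by
    have hlast := w.adj_getVert_succ (i := 2 * j) (by omega)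
    rwa [show 2 * j + 1 = w.length by omega, Walk.getVert_length] at hlast
  have h := kneser_card_sdiff_getVert_le w j (by omega)
  rwa [hadj.2.symm.sdiff_eq_left, A.2] at h

lemma kneser_le_oddGirth {r : ℕ} (hk : k = r * (n - 2 * k) + 1) :
    ((2 * r + 3 : ℕ) : ℕ∞) ≤ oddGirth (kneser n k) :=
  le_oddGirth fun A w ⟨j, hj⟩ => by
    have hkj := kneser_le_mul_of_length_eq w hj
    have hrj : r < j := by
      by_contra! hjr
      have := Nat.mul_le_mul_right (n - 2 * k) hjr
      omega
    omega

lemma kneser_exists_adj_adj (hk : 0 < k) (h : #(U.1 ∪ D.1) + k ≤ n) :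
    ∃ C, (kneser n k).Adj U C ∧ (kneser n k).Adj C D := by
  obtain ⟨C, hC, hdisj⟩ := exists_card_eq_disjoint (U.1 ∪ D.1) (by simpa using h)
  obtain ⟨hCU, hCD⟩ := disjoint_union_right.1 hdisj
  exact ⟨⟨C, hC⟩, kneser_adj_of_disjoint hk hCU.symm, kneser_adj_of_disjoint hk hCD⟩

lemma kneser_exists_card_inter_le (h : 2 * k < n) (A B : {s : Finset (Fin n) // #s = k}) :
    ∃ D : {s : Finset (Fin n) // #s = k},
      #(A.1 ∪ D.1) + k ≤ n ∧ #(D.1 ∩ B.1) ≤ #(A.1 ∩ B.1) - (n - 2 * k) := by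
  -- `D` trades `μ` elements of `A ∩ B` for `μ` elements outside `A ∪ B`.
  set μ := min #(A.1 ∩ B.1) (n - 2 * k)
  obtain ⟨X, hXAB, hX⟩ := exists_subset_card_eq (s := A.1 ∩ B.1) (n := μ) (min_le_left _ _)
  have hXA : X ⊆ A.1 := hXAB.trans inter_subset_left
  have hAB := card_union_add_card_inter A.1 B.1
  obtain ⟨Y, hY, hYAB⟩ := exists_card_eq_disjoint (A.1 ∪ B.1) (m := μ)
    (by simp only [Fintype.card_fin, A.2, B.2] at hAB ⊢; omega)
  obtain ⟨hYA, hYB⟩ := disjoint_union_right.1 hYAB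
  have hD : #((A.1 \ X) ∪ Y) = k := by
    rw [card_union_of_disjoint (disjoint_of_subset_left sdiff_subset hYA.symm),
      card_sdiff_of_subset hXA, hX, hY, A.2]
    have : μ ≤ k := (min_le_left _ _).trans ((card_le_card inter_subset_left).trans A.2.le)
    omega
  refine ⟨⟨(A.1 \ X) ∪ Y, hD⟩, ?_, ?_⟩
  · rw [show A.1 ∪ ((A.1 \ X) ∪ Y) = A.1 ∪ Y by grind, card_union_of_disjoint hYA.symm, A.2, hY]
    omega
  · show #(((A.1 \ X) ∪ Y) ∩ B.1) ≤ _
    have hsub : ((A.1 \ X) ∪ Y) ∩ B.1 ⊆ (A.1 ∩ B.1) \ X := by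
      intro a ha
      simp only [mem_inter, mem_union, mem_sdiff] at ha ⊢
      rcases ha with ⟨⟨haA, haX⟩ | haY, haB⟩
      · exact ⟨⟨haA, haB⟩, haX⟩
      · exact absurd haB (disjoint_left.1 hYB haY)
    have := card_le_card hsub
    rw [card_sdiff_of_subset hXAB, hX] at this
    omega

lemma kneser_exists_odd_walk (h : 2 * k < n) (hk : 0 < k) :
    ∀ m (A B : {s : Finset (Fin n) // #s = k}), #(A.1 ∩ B.1) ≤ m * (n - 2 * k) →
      ∃ w : (kneser n k).Walk A B, Odd w.length ∧ w.length ≤ 2 * m + 1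
  | 0, A, B, hAB => by
    have hd : Disjoint A.1 B.1 :=
      disjoint_iff_inter_eq_empty.2 (card_eq_zero.1 (by simpa using hAB))
    exact ⟨(kneser_adj_of_disjoint hk hd).toWalk, by simp, by simp⟩
  | m + 1, A, B, hAB => by
    obtain ⟨D, hAD, hDB⟩ := kneser_exists_card_inter_le h A B
    obtain ⟨C, hAC, hCD⟩ := kneser_exists_adj_adj hk hAD
    obtain ⟨w, hodd, hlen⟩ := kneser_exists_odd_walk h hk m D B (by rw [add_mul] at hAB; omega)
    exact ⟨.cons hAC (.cons hCD w), by simpa [Nat.odd_add_one] using hodd, by simp; omega⟩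

end Kneser

theorem stmt_14_general {W : Type*} [Fintype W] (G : SimpleGraph W) (n k r : ℕ)
    (h : 2 * k < n) (hr : k - 1 = r * (n - 2 * k))
    (hcard : Fintype.card W < Nat.choose n k)
    (hg : oddGirth (kneser n k) ≤ oddGirth G) :
    IsEmpty (kneser n k →g G) := by
  refine ⟨fun f => ?_⟩
  obtain ⟨A, B, hfAB, hne⟩ : ∃ A B, f A = f B ∧ A ≠ B := by
    refine Function.not_injective_iff.1 fun hinj => hcard.not_ge ?_
    simpa [Fintype.card_finset_len] using Fintype.card_le_of_injective f hinj
  have hAB := kneser_card_inter_lt_of_ne hne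
  obtain ⟨w, hodd, hlen⟩ := kneser_exists_odd_walk h (by omega) r A B (by omega)
  have hgirth : ((2 * r + 3 : ℕ) : ℕ∞) ≤ w.length :=
    calc ((2 * r + 3 : ℕ) : ℕ∞) ≤ oddGirth (kneser n k) := kneser_le_oddGirth (by omega)
      _ ≤ oddGirth G := hg
      _ ≤ ((w.map f).copy rfl hfAB.symm).length := oddGirth_le_length _ (by simpa using hodd)
      _ = w.length := by simp
  have := Nat.cast_le.1 hgirth
  omega

/-- Main Theorem 1: for `n > 2k`, `k - 1 = r(n-2k)`, if `G` has fewer than `C(n,k)` vertices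
and odd girth at least that of `K_{n,k}`, then there is no graph homomorphism
`K_{n,k} → G`. -/
theorem stmt_14 {W : Type*} [Fintype W] (G : SimpleGraph W) (n k r : ℕ)
    (hn : 0 < n) (hk : 0 < k) (h : 2 * k < n) (hr : k - 1 = r * (n - 2 * k))
    (hcard : Fintype.card W < Nat.choose n k)
    (hg : oddGirth (kneser n k) ≤ oddGirth G) :
    IsEmpty (kneser n k →g G) :=
  stmt_14_general G n k r h hr hcard hg
end

section
/- Let G be a graph and r a positive integer. For any edge loop (v₀,...,v_n) in N_r(G) based at v (so each {v_{i−1}, v_i} is a face of N_r(G)), there exists a closed walk γ of length 2rn in G with γ(2ri) = v_i for all i = 0,...,n. -/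
open SimpleGraph

/-- `L` is (the tail of) a closed walk in `G` based at `v`: the full walk is `v :: L`. -/
def IsLoop {V : Type*} (G : SimpleGraph V) (v : V) (L : List V) : Prop :=
  List.Chain G.Adj v L ∧ (v :: L).getLast? = some v

/-- `L` is (the tail of) an edge loop at `v` in the simplicial complex `K`: consecutive
vertices of `v :: L` span a face of `K`, and the walk starts and ends at `v`. -/
def IsELoop {V : Type*} [DecidableEq V] (K : Set (Finset V)) (v : V) (L : List V) : Prop :=
  List.Chain (fun a b => ({a, b} : Finset V) ∈ K) v L ∧ (v :: L).getLast? = some v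

/-!
If `{a, b}` is a face of `N_r(G)`, then `a, b ∈ N_r(w)` for some `w`, so walks `a → w` and
`w → b` of length `r` join `a` to `b` in `2r` steps. Replacing every step of the edge loop by
such a walk gives the closed walk.
-/

theorem List.IsChain.exists_refinement {α : Type*} {R S : α → α → Prop} {k : ℕ} (hk : 0 < k)
    (hRS : ∀ x y, R x y → ∃ t : List α, t.length + 1 = k ∧ IsChain S (x :: (t ++ [y]))) :
    ∀ {a : α} {l : List α}, IsChain R (a :: l) →
      ∃ w : List α, IsChain S (a :: w) ∧ w.length = k * l.length ∧
        ∀ i, (a :: w)[k * i]? = (a :: l)[i]?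
  | a, [], _ => by
    refine ⟨[], .singleton a, rfl, fun i => ?_⟩
    rcases i with _ | i
    · rfl
    · simp [Nat.pos_iff_ne_zero.mp hk]
  | a, b :: l, hl => by
    obtain ⟨hab, hl⟩ := isChain_cons_cons.mp hl
    obtain ⟨t, ht, hatb⟩ := hRS a b hab
    obtain ⟨w, hw, hwlen, hwget⟩ := exists_refinement hk hRS hl
    refine ⟨t ++ b :: w, isChain_cons_split.mpr ⟨hatb, hw⟩, ?_, fun i => ?_⟩
    · simp only [length_append, length_cons, hwlen, ← ht]
      ring
    · rcases i with _ | i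
      · rfl
      · have hat : (a :: t).length = k := ht
        rw [← cons_append, getElem?_append_right (hat ▸ Nat.le_mul_of_pos_right k i.succ_pos),
          hat, Nat.mul_succ, Nat.add_sub_cancel, hwget, getElem?_cons_succ]

lemma mem_nbhd_iff_exists_walk {V : Type*} (G : SimpleGraph V) (r : ℕ) (v a : V) :
    a ∈ nbhd G r v ↔ ∃ p : G.Walk a v, p.length = r := by
  induction r generalizing a with
  | zero =>
    refine ⟨fun h => ?_, fun ⟨p, hp⟩ => Walk.eq_of_length_eq_zero hp⟩
    rw [show a = v from h]
    exact ⟨.nil, rfl⟩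
  | succ r ih =>
    constructor
    · rintro ⟨w, hw, hwa⟩
      obtain ⟨p, hp⟩ := (ih w).mp hw
      exact ⟨.cons hwa.symm p, by simp [hp]⟩
    · rintro ⟨_ | ⟨hac, p⟩, hp⟩
      · simp at hp
      · exact ⟨_, (ih _).mpr ⟨p, Nat.succ_injective hp⟩, hac.symm⟩

lemma exists_walk_of_pair_mem_nComplex {V : Type*} [DecidableEq V] {G : SimpleGraph V} {r : ℕ}
    {a b : V} (h : ({a, b} : Finset V) ∈ nComplex G r) : ∃ p : G.Walk a b, p.length = 2 * r := by
  obtain ⟨w, hw⟩ := h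
  obtain ⟨p, hp⟩ := (mem_nbhd_iff_exists_walk G r w a).mp (hw (by simp))
  obtain ⟨q, hq⟩ := (mem_nbhd_iff_exists_walk G r w b).mp (hw (by simp))
  exact ⟨p.append q.reverse, by simp [hp, hq, two_mul]⟩

lemma SimpleGraph.Walk.exists_isChain_adj {V : Type*} {G : SimpleGraph V} {u v : V}
    (p : G.Walk u v) (hp : ¬ p.Nil) :
    ∃ t : List V, t.length + 1 = p.length ∧ List.IsChain G.Adj (u :: (t ++ [v])) := by
  have htail : p.support.tail ≠ [] := by
    simp [← p.support_tail_of_not_nil hp]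
  have hsupport : p.support = u :: (p.support.tail.dropLast ++ [v]) := by
    conv_lhs => rw [← p.cons_tail_support, ← List.dropLast_append_getLast htail]
    rw [List.getLast_tail, p.getLast_support]
  refine ⟨p.support.tail.dropLast, ?_, hsupport ▸ p.isChain_adj_support⟩
  have := congrArg List.length hsupport
  simp only [p.length_support, List.length_cons, List.length_append, List.length_nil] at this
  omega

lemma exists_isChain_adj_of_pair_mem_nComplex {V : Type*} [DecidableEq V] {G : SimpleGraph V}
    {r : ℕ} (hr : 0 < r) {a b : V} (h : ({a, b} : Finset V) ∈ nComplex G r) :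
    ∃ t : List V, t.length + 1 = 2 * r ∧ List.IsChain G.Adj (a :: (t ++ [b])) := by
  obtain ⟨p, hp⟩ := exists_walk_of_pair_mem_nComplex h
  rw [← hp]
  exact p.exists_isChain_adj (Walk.not_nil_iff_lt_length.mpr (by omega))

/-- For every edge loop `(v₀, …, v_n)` in `N_r(G)` based at `v` there is a closed walk `γ`
of length `2rn` in `G` with `γ(2ri) = v_i` for all `i`. -/
theorem stmt_17 {V : Type*} [DecidableEq V] (G : SimpleGraph V) (r : ℕ) (hr : 0 < r)
    (v : V) (l : List V) (hl : IsELoop (nComplex G r) v l) :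
    ∃ w : List V, IsLoop G v w ∧ w.length = 2 * r * l.length ∧
      ∀ i : ℕ, (v :: w)[2 * r * i]? = (v :: l)[i]? := by
  obtain ⟨hchain, hlast⟩ := hl
  obtain ⟨w, hw, hwlen, hwget⟩ := List.IsChain.exists_refinement (by omega)
    (fun _ _ => exists_isChain_adj_of_pair_mem_nComplex hr) hchain
  refine ⟨w, ⟨hw, ?_⟩, hwlen, hwget⟩
  simpa only [List.getLast?_eq_getElem?, List.length_cons, Nat.add_sub_cancel, hwlen, hwget]
    using hlast
end
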